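/- Let g be a positive symmetric density on ℝ such that g/φ is increasing on [0,∞) from (g/φ)(0) < 1 to ∞, where φ is the standard normal density. Then the ratio Ḡ/Φ̄ is increasing on [0,∞) from the value 1 at 0 to ∞ (i.e., Ḡ(0)/Φ̄(0) = 1, x ↦ Ḡ(x)/Φ̄(x) is strictly increasing on [0,∞), and Ḡ(x)/Φ̄(x) → ∞ as x → ∞). -/
import Mathlib


open MeasureTheory ProbabilityTheory Filter Set
open scoped Classical ENNReal

/-- The standard normal density `φ`. -/
noncomputable def stdphi (x : ℝ) : ℝ := (Real.sqrt (2 * Real.pi))⁻¹ * Real.exp (-(x ^ 2) / 2)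

/-- The standard normal upper tail function `Φ̄`. -/
noncomputable def Phibar (s : ℝ) : ℝ := ∫ x in Set.Ioi s, stdphi x

/-- The inverse of `Φ̄` (as the generalized inverse). -/
noncomputable def PhibarInv (y : ℝ) : ℝ := sInf {x : ℝ | Phibar x ≤ y}

/-- The upper tail function `Ḡ(s) = ∫_s^∞ g`. -/
noncomputable def Gbar (g : ℝ → ℝ) (s : ℝ) : ℝ := ∫ x in Set.Ioi s, g x

/-- The ℓ-value `ℓ(x; w, g)`. -/
noncomputable def lval (g : ℝ → ℝ) (w x : ℝ) : ℝ :=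
  ((1 - w) * stdphi x) / ((1 - w) * stdphi x + w * g x)

/-- The q-value `q(x; w, g)`. -/
noncomputable def qval (g : ℝ → ℝ) (w x : ℝ) : ℝ :=
  ((1 - w) * Phibar |x|) / ((1 - w) * Phibar |x| + w * Gbar g |x|)

/-- `r(w,t) = wt/((1−w)(1−t))`. -/
noncomputable def rwt (w t : ℝ) : ℝ := w * t / ((1 - w) * (1 - t))

/-- `β(x) = g(x)/φ(x) − 1`. -/
noncomputable def betaf (g : ℝ → ℝ) (x : ℝ) : ℝ := g x / stdphi x - 1

/-- `m̃(w) = −E₀[β(X,w)]`, the minus-expectation of the score at a null coordinate. -/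
noncomputable def mtilde (g : ℝ → ℝ) (w : ℝ) : ℝ :=
  -∫ x, betaf g x / (1 + w * betaf g x) * stdphi x

/-- `m₁(μ,w) = E_μ[β(X,w)]` where `X ~ N(μ,1)`. -/
noncomputable def m1 (g : ℝ → ℝ) (μ w : ℝ) : ℝ :=
  ∫ x, betaf g x / (1 + w * betaf g x) * stdphi (x - μ)


lemma stdphi_pos (x : ℝ) : 0 < stdphi x := by unfold stdphi; positivity

lemma stdphi_eq (x : ℝ) : stdphi x = (Real.sqrt (2 * Real.pi))⁻¹ * Real.exp (-(1/2) * x ^ 2) := by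
  unfold stdphi; ring_nf

lemma stdphi_symm (x : ℝ) : stdphi (-x) = stdphi x := by unfold stdphi; ring_nf

lemma integrable_stdphi : Integrable stdphi := by
  have h := (integrable_exp_neg_mul_sq (b := 1/2) (by norm_num)).const_mul
    (Real.sqrt (2 * Real.pi))⁻¹
  convert h using 2 with x
  rw [stdphi_eq]

lemma integral_stdphi : ∫ x, stdphi x = 1 := by
  have h := integral_gaussian (1/2)
  simp only [stdphi_eq]
  rw [integral_const_mul, h, show Real.pi / (1/2) = 2 * Real.pi by ring, inv_mul_cancel₀]
  positivity

lemma half_integral {f : ℝ → ℝ} (hsymm : ∀ x, f (-x) = f x) (hint : ∫ x, f x = 1) :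
    ∫ x in Set.Ioi (0:ℝ), f x = 1/2 := by
  have habs : ∀ x, f |x| = f x := fun x => by
    rcases abs_choice x with h | h
    · rw [h]
    · rw [h, hsymm]
  have h2 := integral_comp_abs (f := f)
  simp only [habs] at h2
  rw [hint] at h2
  linarith

lemma split_integral {f : ℝ → ℝ} (hf : Integrable f) {a b : ℝ} (hab : a ≤ b) :
    ∫ x in Set.Ioi a, f x = (∫ x in Set.Ioc a b, f x) + ∫ x in Set.Ioi b, f x := by
  rw [← setIntegral_union (Set.Ioc_disjoint_Ioi le_rfl) measurableSet_Ioi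
    hf.integrableOn hf.integrableOn, Set.Ioc_union_Ioi_eq_Ioi hab]

lemma Phibar_pos (s : ℝ) : 0 < Phibar s := by
  unfold Phibar
  rw [setIntegral_pos_iff_support_of_nonneg_ae
    (Filter.Eventually.of_forall fun x => (stdphi_pos x).le) integrable_stdphi.integrableOn]
  have : Function.support stdphi = Set.univ := by
    ext x; simp [Function.mem_support, (stdphi_pos x).ne']
  rw [this, Set.univ_inter, Real.volume_Ioi]
  simp

lemma Ioc_phi_pos {a b : ℝ} (hab : a < b) : 0 < ∫ x in Set.Ioc a b, stdphi x := by
  rw [setIntegral_pos_iff_support_of_nonneg_ae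
    (Filter.Eventually.of_forall fun x => (stdphi_pos x).le) integrable_stdphi.integrableOn]
  have : Function.support stdphi = Set.univ := by
    ext x; simp [Function.mem_support, (stdphi_pos x).ne']
  rw [this, Set.univ_inter, Real.volume_Ioc]
  simp [hab]


/-- **Lemma (monotone likelihood ratio for the tails).** Let `g` be a positive symmetric
density such that `g/φ` is increasing on `[0,∞)` from `(g/φ)(0) < 1` to `∞`. Then `Ḡ/Φ̄` is
increasing on `[0,∞)` from the value `1` at `0` to `∞`: `Ḡ(0)/Φ̄(0) = 1`, `x ↦ Ḡ(x)/Φ̄(x)` is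
strictly increasing on `[0,∞)`, and `Ḡ(x)/Φ̄(x) → ∞` as `x → ∞`. -/
theorem Gbar_div_Phibar_increasing
    (g : ℝ → ℝ)
    (hpos : ∀ x, 0 < g x) (hsymm : ∀ x, g (-x) = g x)
    (hdens : ∫ x, g x = 1)
    (hinc : StrictMonoOn (fun x => g x / stdphi x) (Set.Ici 0))
    (h0 : g 0 / stdphi 0 < 1)
    (hinf : Filter.Tendsto (fun x => g x / stdphi x) Filter.atTop Filter.atTop) :
    Gbar g 0 / Phibar 0 = 1 ∧
      StrictMonoOn (fun x => Gbar g x / Phibar x) (Set.Ici 0) ∧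
      Filter.Tendsto (fun x => Gbar g x / Phibar x) Filter.atTop Filter.atTop := by
  set r : ℝ → ℝ := fun x => g x / stdphi x with hr
  have hgi : Integrable g := by
    by_contra h
    rw [integral_undef h] at hdens
    norm_num at hdens
  -- upper comparison on Ioc
  have keyA : ∀ a b : ℝ, 0 ≤ a → a ≤ b →
      (∫ x in Set.Ioc a b, g x) ≤ r b * ∫ x in Set.Ioc a b, stdphi x := by
    intro a b ha hab
    rw [← integral_const_mul]
    refine setIntegral_mono_on hgi.integrableOn
      ((integrable_stdphi.const_mul _).integrableOn) measurableSet_Ioc ?_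
    intro x hx
    have hx0 : (0:ℝ) ≤ x := le_trans ha hx.1.le
    have hrx : r x ≤ r b := hinc.monotoneOn hx0 (le_trans ha hab) hx.2
    have := (div_le_iff₀ (stdphi_pos x)).mp hrx
    linarith
  -- lower comparison on Ioc
  have keyA' : ∀ a b : ℝ, 0 ≤ a → a ≤ b →
      r a * (∫ x in Set.Ioc a b, stdphi x) ≤ ∫ x in Set.Ioc a b, g x := by
    intro a b ha hab
    rw [← integral_const_mul]
    refine setIntegral_mono_on ((integrable_stdphi.const_mul _).integrableOn)
      hgi.integrableOn measurableSet_Ioc ?_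
    intro x hx
    have hx0 : (0:ℝ) ≤ x := le_trans ha hx.1.le
    have hrx : r a ≤ r x := hinc.monotoneOn ha hx0 hx.1.le
    have := (le_div_iff₀ (stdphi_pos x)).mp hrx
    linarith
  -- tail comparison
  have keyTail : ∀ c : ℝ, 0 ≤ c → r c * Phibar c ≤ Gbar g c := by
    intro c hc
    unfold Phibar Gbar
    rw [← integral_const_mul]
    refine setIntegral_mono_on ((integrable_stdphi.const_mul _).integrableOn)
      hgi.integrableOn measurableSet_Ioi ?_
    intro x hx
    have hx0 : (0:ℝ) ≤ x := le_trans hc (le_of_lt hx)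
    have hrx : r c ≤ r x := hinc.monotoneOn hc hx0 (le_of_lt hx)
    have := (le_div_iff₀ (stdphi_pos x)).mp hrx
    linarith
  -- strict tail comparison
  have keyStrict : ∀ b : ℝ, 0 ≤ b → r b * Phibar b < Gbar g b := by
    intro b hb
    have hbc : b ≤ b + 1 := by linarith
    have hsplitG : Gbar g b = (∫ x in Set.Ioc b (b+1), g x) + Gbar g (b+1) :=
      split_integral hgi hbc
    have hsplitP : Phibar b = (∫ x in Set.Ioc b (b+1), stdphi x) + Phibar (b+1) :=
      split_integral integrable_stdphi hbc
    have h1 := keyA' b (b+1) hb hbc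
    have h2 := keyTail (b+1) (by linarith)
    have h3 : r b < r (b+1) := hinc hb (by linarith : (0:ℝ) ≤ b + 1) (by linarith)
    have h4 := Phibar_pos (b+1)
    have h5 : r b * Phibar (b+1) < r (b+1) * Phibar (b+1) := mul_lt_mul_of_pos_right h3 h4
    rw [hsplitG, hsplitP]
    nlinarith
  refine ⟨?_, ?_, ?_⟩
  · have hG : Gbar g 0 = 1/2 := half_integral hsymm hdens
    have hP : Phibar 0 = 1/2 := half_integral stdphi_symm integral_stdphi
    rw [hG, hP]; norm_num
  · intro a ha b hb hab
    simp only
    rw [div_lt_div_iff₀ (Phibar_pos a) (Phibar_pos b)]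
    have hsplitG : Gbar g a = (∫ x in Set.Ioc a b, g x) + Gbar g b :=
      split_integral hgi hab.le
    have hsplitP : Phibar a = (∫ x in Set.Ioc a b, stdphi x) + Phibar b :=
      split_integral integrable_stdphi hab.le
    have h1 := keyA a b ha hab.le
    have h2 := keyStrict b hb
    have h3 := Ioc_phi_pos hab
    have h4 := Phibar_pos b
    rw [hsplitG, hsplitP]
    nlinarith [mul_le_mul_of_nonneg_right h1 h4.le, mul_lt_mul_of_pos_right h2 h3]
  · refine tendsto_atTop_mono' atTop ?_ hinf
    filter_upwards [eventually_ge_atTop (0:ℝ)] with x hx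
    exact (le_div_iff₀ (Phibar_pos x)).2 (keyTail x hx)
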